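/- arXiv:2201.00265 — 7 statements merged into one kernel-verified Lean document; each statement's English description precedes it below -/
import Mathlib

section
/- Let b < -1, set γ = -(b+1)/2 > 0, and let A ∈ ℝ, z₀ ∈ ℝ. Define U(z) = A (cosh(γ(z - z₀)))^{-1/γ}. Then U - U'' = M, where M(z) = (A(1-b)/2) (cosh(γ(z - z₀)))^{b/γ}. That is, the stationary lefton profile U satisfies U(z) - U''(z) = (A(1-b)/2) (cosh(γ(z-z₀)))^{b/γ} for all real z. -/
/-!
Writing `c = cosh (γ (z - z₀))`, the chain rule and `cosh² - sinh² = 1` give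
`(c ^ q)'' = q γ² (q c ^ q - (q - 1) c ^ (q - 2))` for every real exponent `q`.
For `q = -1/γ` we have `q γ² = -γ`, so the `c ^ q` terms of `U - U''` cancel and
`A (1 + γ) c ^ (q - 2)` remains; finally `1 + γ = (1 - b)/2` and `q - 2 = b/γ`.
-/

open Real

section CoshRpow

variable (γ z₀ q : ℝ)

theorem hasDerivAt_mul_sub (z : ℝ) : HasDerivAt (fun z => γ * (z - z₀)) γ z := by
  simpa using ((hasDerivAt_id z).sub_const z₀).const_mul γ

theorem hasDerivAt_cosh_mul_sub_rpow (z : ℝ) :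
    HasDerivAt (fun z => cosh (γ * (z - z₀)) ^ q)
      (q * γ * sinh (γ * (z - z₀)) * cosh (γ * (z - z₀)) ^ (q - 1)) z := by
  convert ((hasDerivAt_mul_sub γ z₀ z).cosh.rpow_const (p := q) (Or.inl (cosh_pos _).ne')) using 1
  ring

theorem hasDerivAt_sinh_mul_sub (z : ℝ) :
    HasDerivAt (fun z => sinh (γ * (z - z₀))) (γ * cosh (γ * (z - z₀))) z := by
  convert (hasDerivAt_mul_sub γ z₀ z).sinh using 1
  ring

theorem iteratedDeriv_two_cosh_mul_sub_rpow (z : ℝ) :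
    iteratedDeriv 2 (fun z => cosh (γ * (z - z₀)) ^ q) z =
      q * γ ^ 2 * (q * cosh (γ * (z - z₀)) ^ q - (q - 1) * cosh (γ * (z - z₀)) ^ (q - 2)) := by
  have hderiv : deriv (fun z => cosh (γ * (z - z₀)) ^ q) =
      fun z => q * γ * sinh (γ * (z - z₀)) * cosh (γ * (z - z₀)) ^ (q - 1) :=
    funext fun z => (hasDerivAt_cosh_mul_sub_rpow γ z₀ q z).deriv
  have hsecond := ((hasDerivAt_sinh_mul_sub γ z₀ z).const_mul (q * γ)).fun_mul
    (hasDerivAt_cosh_mul_sub_rpow γ z₀ (q - 1) z)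
  rw [iteratedDeriv_succ, iteratedDeriv_one, hderiv, hsecond.deriv]
  set c := cosh (γ * (z - z₀))
  have hc : c ≠ 0 := (cosh_pos _).ne'
  have hpow₁ : c ^ q = c ^ (q - 1) * c := by rw [rpow_sub_one hc]; field_simp
  have hpow₂ : c ^ (q - 1 - 1) = c ^ (q - 2) := by ring_nf
  have hpow₃ : c ^ (q - 1) = c ^ (q - 2) * c := by
    rw [← hpow₂, rpow_sub_one hc (q - 1)]; field_simp
  rw [hpow₁, hpow₂, hpow₃]
  linear_combination q * γ ^ 2 * (1 - q) * c ^ (q - 2) * cosh_sq_sub_sinh_sq (γ * (z - z₀))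

end CoshRpow

/-- The stationary lefton profile `U(z) = A cosh(γ(z-z₀))^{-1/γ}` with
`γ = -(b+1)/2` for `b < -1` satisfies `U - U'' = M` with
`M(z) = (A(1-b)/2) cosh(γ(z-z₀))^{b/γ}`. -/
theorem lefton_momentum (b A z₀ : ℝ) (hb : b < -1) (γ : ℝ) (hγ : γ = -(b + 1) / 2)
    (U M : ℝ → ℝ)
    (hU : ∀ z : ℝ, U z = A * Real.cosh (γ * (z - z₀)) ^ (-1 / γ))
    (hM : ∀ z : ℝ, M z = (A * (1 - b) / 2) * Real.cosh (γ * (z - z₀)) ^ (b / γ)) :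
    ∀ z : ℝ, U z - iteratedDeriv 2 U z = M z := by
  have hγ₀ : γ ≠ 0 := by rw [hγ]; linarith
  have hexp : b / γ = -1 / γ - 2 := by field_simp; linarith
  intro z
  rw [show U = fun z => A * cosh (γ * (z - z₀)) ^ (-1 / γ) from funext hU,
    iteratedDeriv_const_mul_field, iteratedDeriv_two_cosh_mul_sub_rpow, hM, hexp]
  field_simp
  rw [hγ]
  ring
end

section
/- Define ζ = (Z/2)^{1/3} for Z > 0 and let P(Z) = (3ζ² - 1)/(3ζ) = (3(Z/2)^{2/3} - 1)/(3(Z/2)^{1/3}). Then, on the region Z > 0 where P ≠ 0, P satisfies P'' = (P')²/P - P'/Z + (2P² + 2)/Z - 1/P, i.e. P is a solution of the b = 2 similarity ODE with parameter a = 2. -/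
/-!
With `ζ = (Z/2)^{1/3}` one has `P = ζ - ζ⁻¹/3`, a Laurent polynomial in `ζ`. Since
`d/dZ (Z/2)^p = (p/2) (Z/2)^{p-1}`, each differentiation lowers the exponents of `ζ` by `3`,
so `P'` and `P''` are again Laurent polynomials in `ζ`; after substituting `Z = 2ζ³` the ODE
becomes a rational identity in `ζ`.
-/

open Set

lemma hasDerivAt_div_const_rpow (c p : ℝ) {x : ℝ} (hx : x / c ≠ 0) :
    HasDerivAt (fun z : ℝ => (z / c) ^ p) (p * (x / c) ^ (p - 1) / c) x :=
  (((hasDerivAt_id' x).div_const c).rpow_const (p := p) (Or.inl hx)).congr_deriv (by ring)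

lemma pow_three_rpow_div_three {t : ℝ} (ht : 0 ≤ t) (r : ℝ) : (t ^ 3) ^ (r / 3) = t ^ r := by
  rw [← Real.rpow_natCast, ← Real.rpow_mul ht]
  congr 1
  ring

lemma exists_pos_pow_three_eq {y : ℝ} (hy : 0 < y) : ∃ t > 0, y = t ^ 3 :=
  ⟨y ^ (3⁻¹ : ℝ), by positivity,
    by simpa using (Real.rpow_inv_natCast_pow hy.le three_ne_zero).symm⟩

lemma deriv_eq_of_eqOn_Ioi {f g : ℝ → ℝ} {a g' x : ℝ} (hfg : EqOn f g (Ioi a))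
    (hg : HasDerivAt g g' x) (hx : a < x) : deriv f x = g' :=
  (hg.congr_of_eventuallyEq (hfg.eventuallyEq_of_mem (Ioi_mem_nhds hx))).deriv

noncomputable def P₂ (Z : ℝ) : ℝ :=
  (3 * (Z / 2) ^ ((2 : ℝ) / 3) - 1) / (3 * (Z / 2) ^ ((1 : ℝ) / 3))

lemma P₂_eqOn :
    EqOn P₂ (fun x => (x / 2) ^ (1 / 3 : ℝ) - (x / 2) ^ (-1 / 3 : ℝ) / 3) (Ioi 0) := by
  intro x (hx : 0 < x)
  obtain ⟨t, ht, hxt⟩ := exists_pos_pow_three_eq (half_pos hx)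
  simp only [P₂, hxt, pow_three_rpow_div_three ht.le,
    Real.rpow_neg ht.le, Real.rpow_ofNat, Real.rpow_one]
  field_simp

lemma deriv_P₂ :
    EqOn (deriv P₂)
      (fun x => (x / 2) ^ (-2 / 3 : ℝ) / 6 + (x / 2) ^ (-4 / 3 : ℝ) / 18) (Ioi 0) := by
  intro x (hx : 0 < x)
  have hx2 : x / 2 ≠ 0 := by positivity
  refine deriv_eq_of_eqOn_Ioi P₂_eqOn (((hasDerivAt_div_const_rpow 2 (1 / 3) hx2).sub
    ((hasDerivAt_div_const_rpow 2 (-1 / 3) hx2).div_const 3)).congr_deriv ?_) hx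
  norm_num
  ring

lemma deriv_deriv_P₂ :
    EqOn (deriv (deriv P₂))
      (fun x => -(x / 2) ^ (-5 / 3 : ℝ) / 18 - (x / 2) ^ (-7 / 3 : ℝ) / 27) (Ioi 0) := by
  intro x (hx : 0 < x)
  have hx2 : x / 2 ≠ 0 := by positivity
  refine deriv_eq_of_eqOn_Ioi deriv_P₂
    ((((hasDerivAt_div_const_rpow 2 (-2 / 3) hx2).div_const 6).add
      ((hasDerivAt_div_const_rpow 2 (-4 / 3) hx2).div_const 18)).congr_deriv ?_) hx
  norm_num
  ring

lemma ode_in_cube_root {t : ℝ} (ht : t ≠ 0) (hP : 3 * t ^ 2 - 1 ≠ 0) :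
    -(t ^ 5)⁻¹ / 18 - (t ^ 7)⁻¹ / 27 =
      ((t ^ 2)⁻¹ / 6 + (t ^ 4)⁻¹ / 18) ^ 2 / ((3 * t ^ 2 - 1) / (3 * t))
        - ((t ^ 2)⁻¹ / 6 + (t ^ 4)⁻¹ / 18) / (2 * t ^ 3)
        + (2 * ((3 * t ^ 2 - 1) / (3 * t)) ^ 2 + 2) / (2 * t ^ 3)
        - 1 / ((3 * t ^ 2 - 1) / (3 * t)) := by
  -- `field_simp` looks for this factor in its own normal form
  have hP' : t ^ 2 * 3 - 1 ≠ 0 := by rwa [mul_comm]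
  field_simp
  ring

/-- `P(Z) = (3(Z/2)^{2/3} - 1)/(3(Z/2)^{1/3})` solves the `b = 2` similarity ODE
with parameter `a = 2`, on the region `Z > 0` where `P ≠ 0`. -/
theorem camassa_holm_a2_solution
    (P : ℝ → ℝ)
    (hP : ∀ Z : ℝ, P Z = (3 * (Z / 2) ^ ((2 : ℝ) / 3) - 1)
      / (3 * (Z / 2) ^ ((1 : ℝ) / 3))) :
    ∀ Z : ℝ, 0 < Z → P Z ≠ 0 →
      deriv (deriv P) Z =
        (deriv P Z) ^ 2 / P Z - deriv P Z / Z
          + (2 * (P Z) ^ 2 + 2) / Z - 1 / P Z := by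
  intro Z hZ hPZ
  obtain rfl : P = P₂ := funext hP
  rw [deriv_deriv_P₂ hZ, deriv_P₂ hZ]
  obtain ⟨t, ht, hZt⟩ := exists_pos_pow_three_eq (half_pos hZ)
  obtain rfl : Z = 2 * t ^ 3 := by linarith
  simp only [P₂, mul_div_cancel_left₀ _ (two_ne_zero' ℝ), pow_three_rpow_div_three ht.le,
    Real.rpow_neg ht.le, Real.rpow_ofNat, Real.rpow_one] at hPZ ⊢
  exact ode_in_cube_root ht.ne' (div_ne_zero_iff.mp hPZ).1
end

section
/- Let a ∈ ℝ and suppose P : ℝ → ℝ is a positive twice differentiable function on an open interval of Z > 0 satisfying the b = 2 similarity equation P'' = (P')²/P - P'/Z + (2P² + a)/Z - 1/P, and suppose also that P₊ := Z(P' + 1)/(2P²) + (-1 - a)/(2P) is nonvanishing on this interval. Then P₊ satisfies the same equation with a replaced by a + 2: P₊'' = (P₊')²/P₊ - P₊'/Z + (2P₊² + a + 2)/Z - 1/P₊. -/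
/-!
Eliminating `P''` by the equation makes `P₊'` a rational function of `Z, P, P'`. Differentiating
that expression and eliminating `P''` once more turns the equation for `P₊` with parameter `a + 2`
into an identity between rational functions of `Z, P, P'`.
-/

open Filter

/-- The right-hand side of the `b = 2` similarity equation `P'' = F(Z, P, P')`. -/
noncomputable def similarityRHS (a Z p q : ℝ) : ℝ :=
  q ^ 2 / p - q / Z + (2 * p ^ 2 + a) / Z - 1 / p

noncomputable def backlundPlus (a Z p q : ℝ) : ℝ :=
  Z * (q + 1) / (2 * p ^ 2) + (-1 - a) / (2 * p)

noncomputable def backlundPlusDeriv (a Z p q : ℝ) : ℝ :=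
  (p * (1 + 2 * p ^ 2 + a + (1 + a) * q) - Z * (q + 1) ^ 2) / (2 * p ^ 3)

section

variable {a Z : ℝ} {f g : ℝ → ℝ}

theorem hasDerivAt_backlundPlus (hf : HasDerivAt f (g Z) Z)
    (hg : HasDerivAt g (similarityRHS a Z (f Z) (g Z)) Z) (hZ : Z ≠ 0) (hf0 : f Z ≠ 0) :
    HasDerivAt (fun t => backlundPlus a t (f t) (g t)) (backlundPlusDeriv a Z (f Z) (g Z)) Z := by
  have hnum := (hasDerivAt_id' Z).fun_mul (hg.add_const 1)
  have hden := (hf.fun_pow 2).const_mul (2 : ℝ)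
  have hlast := (hasDerivAt_const Z (-1 - a)).fun_div (hf.const_mul (2 : ℝ)) (by positivity)
  refine ((hnum.fun_div hden (by positivity)).fun_add hlast).congr_deriv ?_
  simp only [similarityRHS, backlundPlusDeriv]
  field_simp
  ring

theorem hasDerivAt_backlundPlusDeriv (hf : HasDerivAt f (g Z) Z)
    (hg : HasDerivAt g (similarityRHS a Z (f Z) (g Z)) Z) (hZ : Z ≠ 0) (hf0 : f Z ≠ 0)
    (hplus : backlundPlus a Z (f Z) (g Z) ≠ 0) :
    HasDerivAt (fun t => backlundPlusDeriv a t (f t) (g t))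
      (similarityRHS (a + 2) Z (backlundPlus a Z (f Z) (g Z))
        (backlundPlusDeriv a Z (f Z) (g Z))) Z := by
  have hnum := (hf.fun_mul ((((hf.fun_pow 2).const_mul 2).const_add 1).add_const a |>.fun_add
    (hg.const_mul (1 + a)))).fun_sub ((hasDerivAt_id' Z).fun_mul ((hg.add_const 1).fun_pow 2))
  have hden := (hf.fun_pow 3).const_mul (2 : ℝ)
  refine (hnum.fun_div hden (by positivity)).congr_deriv ?_
  have hplus' : Z * (g Z + 1) + f Z * (-1 - a) ≠ 0 := by
    contrapose! hplus
    rw [backlundPlus]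
    field_simp
    linear_combination hplus
  simp only [similarityRHS, backlundPlus, backlundPlusDeriv]
  push_cast
  field_simp
  ring

end

theorem backlund_camassa_holm_general (a : ℝ) (s : Set ℝ) (hs : IsOpen s)
    (hsub : s ⊆ Set.Ioi (0 : ℝ))
    (P : ℝ → ℝ)
    (hPdiff : ∀ Z ∈ s, DifferentiableAt ℝ P Z)
    (hPdiff2 : ∀ Z ∈ s, DifferentiableAt ℝ (deriv P) Z)
    (hPpos : ∀ Z ∈ s, 0 < P Z)
    (hode : ∀ Z ∈ s, deriv (deriv P) Z =
      (deriv P Z) ^ 2 / P Z - deriv P Z / Z + (2 * (P Z) ^ 2 + a) / Z - 1 / P Z)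
    (Pp : ℝ → ℝ)
    (hPp : ∀ Z : ℝ, Pp Z = Z * (deriv P Z + 1) / (2 * (P Z) ^ 2)
      + (-1 - a) / (2 * P Z))
    (hPpne : ∀ Z ∈ s, Pp Z ≠ 0) :
    ∀ Z ∈ s, deriv (deriv Pp) Z =
      (deriv Pp Z) ^ 2 / Pp Z - deriv Pp Z / Z
        + (2 * (Pp Z) ^ 2 + (a + 2)) / Z - 1 / Pp Z := by
  obtain rfl : Pp = fun t => backlundPlus a t (P t) (deriv P t) := funext hPp
  have hP : ∀ t ∈ s, HasDerivAt P (deriv P t) t := fun t ht => (hPdiff t ht).hasDerivAt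
  have hP' : ∀ t ∈ s, HasDerivAt (deriv P) (similarityRHS a t (P t) (deriv P t)) t :=
    fun t ht => (hPdiff2 t ht).hasDerivAt.congr_deriv (hode t ht)
  have hderiv : ∀ t ∈ s, deriv (fun t => backlundPlus a t (P t) (deriv P t)) t =
      backlundPlusDeriv a t (P t) (deriv P t) := fun t ht =>
    (hasDerivAt_backlundPlus (hP t ht) (hP' t ht) (hsub ht).ne' (hPpos t ht).ne').deriv
  intro Z hZ
  rw [(eventuallyEq_of_mem (hs.mem_nhds hZ) hderiv).deriv_eq, hderiv Z hZ,
    (hasDerivAt_backlundPlusDeriv (hP Z hZ) (hP' Z hZ) (hsub hZ).ne' (hPpos Z hZ).ne'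
      (hPpne Z hZ)).deriv]
  rfl

/-- Bäcklund transformation for the `b = 2` similarity equation:
if `P` solves `P'' = (P')²/P - P'/Z + (2P² + a)/Z - 1/P` on an open interval of
positive `Z`, then `P₊ = Z(P'+1)/(2P²) + (-1-a)/(2P)`, where nonvanishing,
solves the same equation with `a` replaced by `a + 2`. -/
theorem backlund_camassa_holm (a : ℝ) (s : Set ℝ) (hs : IsOpen s)
    (hsub : s ⊆ Set.Ioi (0 : ℝ)) (hconn : s.OrdConnected)
    (P : ℝ → ℝ)
    (hPdiff : ∀ Z ∈ s, DifferentiableAt ℝ P Z)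
    (hPdiff2 : ∀ Z ∈ s, DifferentiableAt ℝ (deriv P) Z)
    (hPpos : ∀ Z ∈ s, 0 < P Z)
    (hode : ∀ Z ∈ s, deriv (deriv P) Z =
      (deriv P Z) ^ 2 / P Z - deriv P Z / Z + (2 * (P Z) ^ 2 + a) / Z - 1 / P Z)
    (Pp : ℝ → ℝ)
    (hPp : ∀ Z : ℝ, Pp Z = Z * (deriv P Z + 1) / (2 * (P Z) ^ 2)
      + (-1 - a) / (2 * P Z))
    (hPpne : ∀ Z ∈ s, Pp Z ≠ 0) :
    ∀ Z ∈ s, deriv (deriv Pp) Z =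
      (deriv Pp Z) ^ 2 / Pp Z - deriv Pp Z / Z
        + (2 * (Pp Z) ^ 2 + (a + 2)) / Z - 1 / Pp Z :=
  backlund_camassa_holm_general a s hs hsub P hPdiff hPdiff2 hPpos hode Pp hPp hPpne
end

section
/- Let a ∈ ℝ and let P solve the b = 2 similarity equation P'' = (P')²/P - P'/Z + (2P² + a)/Z - 1/P on an interval with P > 0 and Z > 0. Define P± = Z(±P' + 1)/(2P²) + (∓1 - a)/(2P). Then P₊ + P₋ = Z/P² - a/P, and moreover P₊ + P₋ = 2P - (Z (log P)')' , i.e. P₊ + P₋ = 2P - d/dZ [Z P'/P]. -/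
/-- For a solution of the `b = 2` similarity equation, the Bäcklund transforms
`P± = Z(±P'+1)/(2P²) + (∓1-a)/(2P)` satisfy `P₊ + P₋ = Z/P² - a/P` and
`P₊ + P₋ = 2P - d/dZ [Z P'/P]`. -/
theorem backlund_sum_camassa_holm (a : ℝ) (s : Set ℝ) (hs : IsOpen s)
    (hsub : s ⊆ Set.Ioi (0 : ℝ))
    (P : ℝ → ℝ)
    (hPdiff : ∀ Z ∈ s, DifferentiableAt ℝ P Z)
    (hPdiff2 : ∀ Z ∈ s, DifferentiableAt ℝ (deriv P) Z)
    (hPpos : ∀ Z ∈ s, 0 < P Z)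
    (hode : ∀ Z ∈ s, deriv (deriv P) Z =
      (deriv P Z) ^ 2 / P Z - deriv P Z / Z + (2 * (P Z) ^ 2 + a) / Z - 1 / P Z)
    (Pp Pm : ℝ → ℝ)
    (hPp : ∀ Z : ℝ, Pp Z = Z * (deriv P Z + 1) / (2 * (P Z) ^ 2)
      + (-1 - a) / (2 * P Z))
    (hPm : ∀ Z : ℝ, Pm Z = Z * (-deriv P Z + 1) / (2 * (P Z) ^ 2)
      + (1 - a) / (2 * P Z)) :
    ∀ Z ∈ s,
      Pp Z + Pm Z = Z / (P Z) ^ 2 - a / P Z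
      ∧ Pp Z + Pm Z = 2 * P Z - deriv (fun y => y * deriv P y / P y) Z := by
  intro Z hZ
  have hZpos : 0 < Z := hsub hZ
  have hP : 0 < P Z := hPpos Z hZ
  have hPne : P Z ≠ 0 := ne_of_gt hP
  have hZne : Z ≠ 0 := ne_of_gt hZpos
  have hsum : Pp Z + Pm Z = Z / (P Z) ^ 2 - a / P Z := by
    rw [hPp Z, hPm Z]
    field_simp
    ring
  refine ⟨hsum, ?_⟩
  have h1 : HasDerivAt (fun y => y * deriv P y)
      (1 * deriv P Z + Z * deriv (deriv P) Z) Z :=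
    (hasDerivAt_id Z).mul (hPdiff2 Z hZ).hasDerivAt
  have h2 : HasDerivAt (fun y => y * deriv P y / P y)
      (((1 * deriv P Z + Z * deriv (deriv P) Z) * P Z
        - (Z * deriv P Z) * deriv P Z) / (P Z) ^ 2) Z :=
    h1.div (hPdiff Z hZ).hasDerivAt hPne
  rw [hsum, h2.deriv, hode Z hZ]
  field_simp
  ring
end

section
/- Let P : (0,∞) → ℝ be positive and twice differentiable and satisfy the b = 3 similarity ODE P'' = (P')²/P - P'/Z + (3P³ + a)/Z - 1/P on Z > 0. Define new variables ζ = 4(Z/3)^{3/4} and w(ζ) = (Z/3)^{-1/4} P(Z) (with Z = 3(ζ/4)^{4/3}). Then w satisfies the Painlevé III equation d²w/dζ² = (1/w)(dw/dζ)² - (1/ζ)(dw/dζ) + (1/ζ)(α w² + β) + γ w³ + δ/w with α = 0, β = (4/3)a, γ = 1, δ = -1. -/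
/-!
With `s = (ζ/4)^{1/3}` one has `ζ = 4 s³`, `Z = 3 s⁴`, `dZ/dζ = s`, `ds/dζ = 1/(12 s²)` and
`w = P(Z)/s`. The chain rule gives `w' = P' - P/(12 s⁴)` and
`w'' = s P'' - P'/(12 s³) + P/(36 s⁷)`; substituting the similarity ODE for `P''` at `Z = 3 s⁴`
turns this into Painlevé III, an identity of rational functions in `s`, `P`, `P'`.
-/

namespace DegasperisProcesi

noncomputable def cbrtQuarter (ζ : ℝ) : ℝ := (ζ / 4) ^ ((1 : ℝ) / 3)

variable {ζ : ℝ}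

lemma cbrtQuarter_pos (hζ : 0 < ζ) : 0 < cbrtQuarter ζ :=
  Real.rpow_pos_of_pos (by positivity) _

lemma rpow_eq_cbrtQuarter_pow (hζ : 0 ≤ ζ) (n : ℕ) :
    (ζ / 4) ^ ((n : ℝ) / 3) = cbrtQuarter ζ ^ n := by
  rw [cbrtQuarter, ← Real.rpow_natCast, ← Real.rpow_mul (by positivity), one_div_mul_eq_div]

lemma eq_four_mul_cbrtQuarter_pow_three (hζ : 0 ≤ ζ) : ζ = 4 * cbrtQuarter ζ ^ 3 := by
  rw [← rpow_eq_cbrtQuarter_pow hζ 3]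
  norm_num
  ring

lemma hasDerivAt_cbrtQuarter (hζ : 0 < ζ) :
    HasDerivAt cbrtQuarter (1 / (12 * cbrtQuarter ζ ^ 2)) ζ := by
  have h := ((hasDerivAt_id ζ).div_const 4).rpow_const (p := (1 : ℝ) / 3)
    (Or.inl (by positivity))
  refine h.congr_deriv ?_
  rw [id, show (1 : ℝ) / 3 - 1 = -((2 : ℕ) / 3) by norm_num, Real.rpow_neg (by positivity),
    rpow_eq_cbrtQuarter_pow hζ.le]
  ring

lemma rpow_neg_quarter_mul_comp_eq (P : ℝ → ℝ) (hζ : 0 < ζ) :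
    ((3 * (ζ / 4) ^ ((4 : ℝ) / 3)) / 3) ^ (-(1 : ℝ) / 4) * P (3 * (ζ / 4) ^ ((4 : ℝ) / 3))
      = (cbrtQuarter ζ)⁻¹ * P (3 * cbrtQuarter ζ ^ 4) := by
  have h4 := rpow_eq_cbrtQuarter_pow hζ.le 4
  push_cast at h4
  rw [h4, mul_div_cancel_left₀ _ three_ne_zero, ← Real.rpow_natCast,
    ← Real.rpow_mul (cbrtQuarter_pos hζ).le]
  norm_num [Real.rpow_neg_one]

section ChainRule

variable {P s : ℝ → ℝ} {x : ℝ}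

lemma hasDerivAt_three_mul_pow_four (hs : HasDerivAt s (1 / (12 * s x ^ 2)) x) (hsx : s x ≠ 0) :
    HasDerivAt (fun y => 3 * s y ^ 4) (s x) x := by
  refine ((hs.fun_pow 4).const_mul 3).congr_deriv ?_
  field_simp
  norm_num

lemma hasDerivAt_inv_mul_comp (hs : HasDerivAt s (1 / (12 * s x ^ 2)) x) (hsx : s x ≠ 0)
    (hP : DifferentiableAt ℝ P (3 * s x ^ 4)) :
    HasDerivAt (fun y => (s y)⁻¹ * P (3 * s y ^ 4))
      (deriv P (3 * s x ^ 4) - P (3 * s x ^ 4) / (12 * s x ^ 4)) x := by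
  refine ((hs.fun_inv hsx).fun_mul
    (hP.hasDerivAt.comp x (hasDerivAt_three_mul_pow_four hs hsx))).congr_deriv ?_
  simp only [Function.comp_apply]
  field_simp
  ring

lemma hasDerivAt_deriv_comp_sub_div (hs : HasDerivAt s (1 / (12 * s x ^ 2)) x) (hsx : s x ≠ 0)
    (hP : DifferentiableAt ℝ P (3 * s x ^ 4))
    (hP' : DifferentiableAt ℝ (deriv P) (3 * s x ^ 4)) :
    HasDerivAt (fun y => deriv P (3 * s y ^ 4) - P (3 * s y ^ 4) / (12 * s y ^ 4))
      (s x * deriv (deriv P) (3 * s x ^ 4) - deriv P (3 * s x ^ 4) / (12 * s x ^ 3)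
        + P (3 * s x ^ 4) / (36 * s x ^ 7)) x := by
  have hZ := hasDerivAt_three_mul_pow_four hs hsx
  refine ((hP'.hasDerivAt.comp x hZ).fun_sub ((hP.hasDerivAt.comp x hZ).fun_div
    ((hs.fun_pow 4).const_mul 12) (by simp [hsx]))).congr_deriv ?_
  simp only [Function.comp_apply]
  field_simp
  norm_num
  ring

end ChainRule

lemma painleve_iii_of_similarity_ode {a ζ s p p' p'' : ℝ} (hζ : ζ = 4 * s ^ 3) (hs : s ≠ 0)
    (hp : p ≠ 0)
    (hode : p'' = p' ^ 2 / p - p' / (3 * s ^ 4) + (3 * p ^ 3 + a) / (3 * s ^ 4) - 1 / p) :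
    s * p'' - p' / (12 * s ^ 3) + p / (36 * s ^ 7)
      = (p' - p / (12 * s ^ 4)) ^ 2 / (s⁻¹ * p) - (p' - p / (12 * s ^ 4)) / ζ
        + ((0 : ℝ) * (s⁻¹ * p) ^ 2 + (4 / 3) * a) / ζ + 1 * (s⁻¹ * p) ^ 3
        + (-1) / (s⁻¹ * p) := by
  subst hζ hode
  field_simp
  ring

end DegasperisProcesi

open Filter DegasperisProcesi

/-- The `b = 3` similarity ODE transforms to Painlevé III with parameters
`α = 0`, `β = 4a/3`, `γ = 1`, `δ = -1` under `w = (Z/3)^{-1/4} P`,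
`ζ = 4(Z/3)^{3/4}` (i.e. `Z = 3(ζ/4)^{4/3}`). -/
theorem degasperis_procesi_to_painleve_iii (a : ℝ)
    (P : ℝ → ℝ)
    (hPdiff : ∀ Z : ℝ, 0 < Z → DifferentiableAt ℝ P Z)
    (hPdiff2 : ∀ Z : ℝ, 0 < Z → DifferentiableAt ℝ (deriv P) Z)
    (hPpos : ∀ Z : ℝ, 0 < Z → 0 < P Z)
    (hode : ∀ Z : ℝ, 0 < Z →
      deriv (deriv P) Z =
        (deriv P Z) ^ 2 / P Z - deriv P Z / Z
          + (3 * (P Z) ^ 3 + a) / Z - 1 / P Z)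
    (w : ℝ → ℝ)
    (hw : ∀ ζ : ℝ, 0 < ζ →
      w ζ = ((3 * (ζ / 4) ^ ((4 : ℝ) / 3)) / 3) ^ (-(1 : ℝ) / 4)
        * P (3 * (ζ / 4) ^ ((4 : ℝ) / 3))) :
    ∀ ζ : ℝ, 0 < ζ →
      deriv (deriv w) ζ =
        (deriv w ζ) ^ 2 / w ζ - deriv w ζ / ζ
          + ((0 : ℝ) * (w ζ) ^ 2 + (4 / 3) * a) / ζ
          + 1 * (w ζ) ^ 3 + (-1) / w ζ := by
  have hZ (x : ℝ) (hx : 0 < x) : 0 < 3 * cbrtQuarter x ^ 4 := by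
    have := cbrtQuarter_pos hx
    positivity
  have hw_eq (x : ℝ) (hx : 0 < x) :
      w =ᶠ[nhds x] fun y => (cbrtQuarter y)⁻¹ * P (3 * cbrtQuarter y ^ 4) :=
    eventually_of_mem (Ioi_mem_nhds hx) fun y hy =>
      (hw y hy).trans (rpow_neg_quarter_mul_comp_eq P hy)
  have hw' (x : ℝ) (hx : 0 < x) : HasDerivAt w
      (deriv P (3 * cbrtQuarter x ^ 4) - P (3 * cbrtQuarter x ^ 4) / (12 * cbrtQuarter x ^ 4)) x :=
    (hasDerivAt_inv_mul_comp (hasDerivAt_cbrtQuarter hx) (cbrtQuarter_pos hx).ne'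
      (hPdiff _ (hZ x hx))).congr_of_eventuallyEq (hw_eq x hx)
  intro ζ hζ
  have hw'' := (hasDerivAt_deriv_comp_sub_div (hasDerivAt_cbrtQuarter hζ) (cbrtQuarter_pos hζ).ne'
    (hPdiff _ (hZ ζ hζ)) (hPdiff2 _ (hZ ζ hζ))).congr_of_eventuallyEq
    (eventually_of_mem (Ioi_mem_nhds hζ) fun x hx => (hw' x hx).deriv)
  rw [hw''.deriv, (hw' ζ hζ).deriv, (hw_eq ζ hζ).eq_of_nhds]
  exact painleve_iii_of_similarity_ode (eq_four_mul_cbrtQuarter_pow_three hζ.le)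
    (cbrtQuarter_pos hζ).ne' (hPpos _ (hZ ζ hζ)).ne' (hode _ (hZ ζ hζ))
end

section
/- Let b, a, r, s be real constants with r ≠ 0, b ≠ 1, and s ∈ {1, -1}. Consider the Hamiltonian h(Z, P, π) = r Z⁻¹ P² π² + (s + (1 - a s) Z⁻¹ P) π - (b/(2r(b-1))) P^{b-1} for Z > 0, P > 0. Then Hamilton's equations dP/dZ = ∂h/∂π, dπ/dZ = -∂h/∂P imply that P satisfies the second-order ODE P'' = (P')²/P - P'/Z + (bP^b + a)/Z - 1/P. -/
/-!
Hamilton's first equation gives `P' = 2rZ⁻¹P²π + s + (1 - as)Z⁻¹P` on `Z > 0`. Differentiating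
this once more, the second equation replaces `π'`, and the first one, solved for `π`, removes `π`.
The potential term enters through `P^(b-2) · P² = P^b`, and the remaining terms collapse to the
similarity ODE because `s² = 1`.
-/

noncomputable def similarityHamiltonian (b a r s Z p q : ℝ) : ℝ :=
  r * Z⁻¹ * p ^ 2 * q ^ 2 + (s + (1 - a * s) * Z⁻¹ * p) * q
    - b / (2 * r * (b - 1)) * p ^ (b - 1)

namespace similarityHamiltonian

variable {b a r s Z : ℝ}

theorem hasDerivAt_momentum (p q : ℝ) :
    HasDerivAt (fun q => similarityHamiltonian b a r s Z p q)
      (2 * r * Z⁻¹ * p ^ 2 * q + s + (1 - a * s) * Z⁻¹ * p) q := by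
  refine ((((hasDerivAt_pow 2 q).const_mul (r * Z⁻¹ * p ^ 2)).add
    ((hasDerivAt_id q).const_mul (s + (1 - a * s) * Z⁻¹ * p))).sub_const
    (b / (2 * r * (b - 1)) * p ^ (b - 1))).congr_deriv ?_
  simp only [Nat.cast_ofNat]
  ring

theorem hasDerivAt_position (hb : b ≠ 1) {p : ℝ} (hp : 0 < p) (q : ℝ) :
    HasDerivAt (fun p => similarityHamiltonian b a r s Z p q)
      (2 * r * Z⁻¹ * p * q ^ 2 + (1 - a * s) * Z⁻¹ * q - b / (2 * r) * p ^ (b - 2)) p := by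
  have h := (((hasDerivAt_pow 2 p).const_mul (r * Z⁻¹)).mul_const (q ^ 2)).add
    ((((hasDerivAt_id p).const_mul ((1 - a * s) * Z⁻¹)).const_add s).mul_const q) |>.sub
    ((Real.hasDerivAt_rpow_const (p := b - 1) (Or.inl hp.ne')).const_mul
      (b / (2 * r * (b - 1))))
  refine h.congr_deriv ?_
  have hcoeff : b / (2 * r * (b - 1)) * (b - 1) = b / (2 * r) := by
    rw [div_mul_eq_mul_div, mul_div_mul_right _ _ (sub_ne_zero.mpr hb)]
  rw [show b - 1 - 1 = b - 2 by ring]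
  simp only [Nat.cast_ofNat]
  linear_combination -p ^ (b - 2) * hcoeff

end similarityHamiltonian

theorem hasDerivAt_similarityVelocity {r s a Z : ℝ} {P π : ℝ → ℝ} (hZ : Z ≠ 0)
    (hP : DifferentiableAt ℝ P Z) (hπ : DifferentiableAt ℝ π Z) :
    HasDerivAt (fun W => 2 * r * W⁻¹ * P W ^ 2 * π W + s + (1 - a * s) * W⁻¹ * P W)
      (2 * r * Z⁻¹ * (2 * P Z * deriv P Z * π Z + P Z ^ 2 * deriv π Z - Z⁻¹ * P Z ^ 2 * π Z)
        + (1 - a * s) * Z⁻¹ * (deriv P Z - Z⁻¹ * P Z)) Z := by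
  have hinv := hasDerivAt_inv hZ
  have h := ((((hinv.const_mul (2 * r)).mul (hP.hasDerivAt.pow 2)).mul hπ.hasDerivAt).add_const
    s).add ((hinv.const_mul (1 - a * s)).mul hP.hasDerivAt)
  refine h.congr_deriv ?_
  simp only [Pi.mul_apply, Pi.pow_apply]
  ring

theorem similarity_ode_of_hamilton_equations {b a r s Z p q dp dq : ℝ} (hr : r ≠ 0)
    (hs : s ^ 2 = 1) (hZ : Z ≠ 0) (hp : 0 < p)
    (hdp : dp = 2 * r * Z⁻¹ * p ^ 2 * q + s + (1 - a * s) * Z⁻¹ * p)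
    (hdq : dq = -(2 * r * Z⁻¹ * p * q ^ 2 + (1 - a * s) * Z⁻¹ * q - b / (2 * r) * p ^ (b - 2))) :
    2 * r * Z⁻¹ * (2 * p * dp * q + p ^ 2 * dq - Z⁻¹ * p ^ 2 * q)
        + (1 - a * s) * Z⁻¹ * (dp - Z⁻¹ * p)
      = dp ^ 2 / p - dp / Z + (b * p ^ b + a) / Z - 1 / p := by
  have hpow : p ^ b = p ^ (b - 2) * p ^ 2 := by
    rw [← Real.rpow_natCast p 2, ← Real.rpow_add hp]
    norm_num
  subst hdp hdq
  rw [hpow]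
  field_simp
  linear_combination (p * Z * a - Z ^ 2) * hs

theorem hamiltonian_form_similarity_general (b a r s : ℝ) (hr : r ≠ 0) (hb : b ≠ 1)
    (hsgn : s = 1 ∨ s = -1)
    (h : ℝ → ℝ → ℝ → ℝ)
    (hh : ∀ Z p q : ℝ, h Z p q =
      r * Z⁻¹ * p ^ 2 * q ^ 2 + (s + (1 - a * s) * Z⁻¹ * p) * q
        - (b / (2 * r * (b - 1))) * p ^ (b - 1))
    (P π : ℝ → ℝ)
    (hPdiff : ∀ Z : ℝ, 0 < Z → DifferentiableAt ℝ P Z)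
    (hπdiff : ∀ Z : ℝ, 0 < Z → DifferentiableAt ℝ π Z)
    (hPpos : ∀ Z : ℝ, 0 < Z → 0 < P Z)
    (ham1 : ∀ Z : ℝ, 0 < Z →
      deriv P Z = deriv (fun q => h Z (P Z) q) (π Z))
    (ham2 : ∀ Z : ℝ, 0 < Z →
      deriv π Z = -deriv (fun p => h Z p (π Z)) (P Z)) :
    ∀ Z : ℝ, 0 < Z →
      deriv (deriv P) Z =
        (deriv P Z) ^ 2 / P Z - deriv P Z / Z
          + (b * (P Z) ^ b + a) / Z - 1 / P Z := by
  obtain rfl : h = similarityHamiltonian b a r s :=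
    funext fun Z => funext fun p => funext (hh Z p)
  have velocity (Z : ℝ) (hZ : 0 < Z) :
      deriv P Z = 2 * r * Z⁻¹ * P Z ^ 2 * π Z + s + (1 - a * s) * Z⁻¹ * P Z :=
    (ham1 Z hZ).trans (similarityHamiltonian.hasDerivAt_momentum _ _).deriv
  have force (Z : ℝ) (hZ : 0 < Z) : deriv π Z = -(2 * r * Z⁻¹ * P Z * π Z ^ 2
      + (1 - a * s) * Z⁻¹ * π Z - b / (2 * r) * P Z ^ (b - 2)) :=
    (ham2 Z hZ).trans
      (congrArg _ (similarityHamiltonian.hasDerivAt_position hb (hPpos Z hZ) _).deriv)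
  have hs : s ^ 2 = 1 := by rcases hsgn with rfl | rfl <;> norm_num
  intro Z hZ
  have hvelocity_near : deriv P =ᶠ[nhds Z]
      fun W => 2 * r * W⁻¹ * P W ^ 2 * π W + s + (1 - a * s) * W⁻¹ * P W :=
    (eventually_gt_nhds hZ).mono velocity
  rw [hvelocity_near.deriv_eq,
    (hasDerivAt_similarityVelocity hZ.ne' (hPdiff Z hZ) (hπdiff Z hZ)).deriv]
  exact similarity_ode_of_hamilton_equations hr hs hZ.ne' (hPpos Z hZ) (velocity Z hZ) (force Z hZ)

/-- Hamilton's equations for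
`h = rZ⁻¹P²π² + (s + (1-as)Z⁻¹P)π - (b/(2r(b-1)))P^{b-1}`
imply the second-order similarity ODE
`P'' = (P')²/P - P'/Z + (bP^b + a)/Z - 1/P`. -/
theorem hamiltonian_form_similarity (b a r s : ℝ) (hr : r ≠ 0) (hb : b ≠ 1)
    (hsgn : s = 1 ∨ s = -1)
    (h : ℝ → ℝ → ℝ → ℝ)
    (hh : ∀ Z p q : ℝ, h Z p q =
      r * Z⁻¹ * p ^ 2 * q ^ 2 + (s + (1 - a * s) * Z⁻¹ * p) * q
        - (b / (2 * r * (b - 1))) * p ^ (b - 1))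
    (P π : ℝ → ℝ)
    (hPdiff : ∀ Z : ℝ, 0 < Z → DifferentiableAt ℝ P Z)
    (hPdiff2 : ∀ Z : ℝ, 0 < Z → DifferentiableAt ℝ (deriv P) Z)
    (hπdiff : ∀ Z : ℝ, 0 < Z → DifferentiableAt ℝ π Z)
    (hPpos : ∀ Z : ℝ, 0 < Z → 0 < P Z)
    (ham1 : ∀ Z : ℝ, 0 < Z →
      deriv P Z = deriv (fun q => h Z (P Z) q) (π Z))
    (ham2 : ∀ Z : ℝ, 0 < Z →
      deriv π Z = -deriv (fun p => h Z p (π Z)) (P Z)) :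
    ∀ Z : ℝ, 0 < Z →
      deriv (deriv P) Z =
        (deriv P Z) ^ 2 / P Z - deriv P Z / Z
          + (b * (P Z) ^ b + a) / Z - 1 / P Z :=
  hamiltonian_form_similarity_general b a r s hr hb hsgn h hh P π hPdiff hπdiff hPpos ham1 ham2
end

section
/- Let b ∈ ℝ and consider the two-peakon system for positions q₁ < q₂ and amplitudes p₁, p₂ evolving by dq_j/dt = ∂H̃/∂p_j, dp_j/dt = -(b-1) ∂H̃/∂q_j, where H̃ = (1/2)(p₁² + p₂² + 2p₁p₂ e^{-(q₂-q₁)}). Then along any solution with q₁(t) < q₂(t), both H = p₁ + p₂ and the quantity W = p₁ p₂ (1 - e^{-(q₂-q₁)})^{b-1} are constant in time (have zero time derivative). -/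
/-!
The flow has `p₂' = -p₁'`, so `H` is conserved. With `E = e^{-(q₂-q₁)}` the flow gives
`(q₂ - q₁)' = (p₂ - p₁)(1 - E)`, so `1 - E` has logarithmic derivative `E(p₂ - p₁)`; hence
`(1 - E)^{b-1}` and `p₁p₂` have the opposite logarithmic derivatives `±(b - 1)E(p₂ - p₁)`,
and their product `W` is conserved.
-/

open Real

noncomputable def twoPeakonHamiltonian (Q₁ Q₂ P₁ P₂ : ℝ) : ℝ :=
  (1 / 2) * (P₁ ^ 2 + P₂ ^ 2 + 2 * P₁ * P₂ * exp (-(Q₂ - Q₁)))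

section PartialDerivatives

variable (Q₁ Q₂ P₁ P₂ : ℝ)

theorem hasDerivAt_twoPeakonHamiltonian_p₁ :
    HasDerivAt (fun x => twoPeakonHamiltonian Q₁ Q₂ x P₂)
      (P₁ + P₂ * exp (-(Q₂ - Q₁))) P₁ := by
  unfold twoPeakonHamiltonian
  exact ((((hasDerivAt_pow 2 P₁).add_const _).add
    ((((hasDerivAt_id P₁).const_mul 2).mul_const P₂).mul_const _)).const_mul _).congr_deriv
    (by ring)

theorem hasDerivAt_twoPeakonHamiltonian_p₂ :
    HasDerivAt (fun x => twoPeakonHamiltonian Q₁ Q₂ P₁ x)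
      (P₂ + P₁ * exp (-(Q₂ - Q₁))) P₂ := by
  unfold twoPeakonHamiltonian
  exact ((((hasDerivAt_pow 2 P₂).const_add _).add
    (((hasDerivAt_id P₂).const_mul (2 * P₁)).mul_const _)).const_mul _).congr_deriv
    (by ring)

theorem hasDerivAt_twoPeakonHamiltonian_q₁ :
    HasDerivAt (fun x => twoPeakonHamiltonian x Q₂ P₁ P₂)
      (P₁ * P₂ * exp (-(Q₂ - Q₁))) Q₁ := by
  unfold twoPeakonHamiltonian
  exact ((((hasDerivAt_id' Q₁).const_sub Q₂).fun_neg.exp.const_mul (2 * P₁ * P₂)).const_add _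
    |>.const_mul _).congr_deriv (by ring)

theorem hasDerivAt_twoPeakonHamiltonian_q₂ :
    HasDerivAt (fun x => twoPeakonHamiltonian Q₁ x P₁ P₂)
      (-(P₁ * P₂ * exp (-(Q₂ - Q₁)))) Q₂ := by
  unfold twoPeakonHamiltonian
  exact ((((hasDerivAt_id' Q₂).sub_const Q₁).fun_neg.exp.const_mul (2 * P₁ * P₂)).const_add _
    |>.const_mul _).congr_deriv (by ring)

end PartialDerivatives

theorem HasDerivAt.rpow_const_of_eq_mul {u : ℝ → ℝ} {c t : ℝ} (hu : HasDerivAt u (c * u t) t)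
    (hne : u t ≠ 0) (r : ℝ) :
    HasDerivAt (fun τ => u τ ^ r) (r * c * u t ^ r) t := by
  refine (hu.rpow_const (Or.inl hne)).congr_deriv ?_
  rw [rpow_sub_one hne]
  field_simp

theorem hasDerivAt_twoPeakon_W_eq_zero {q₁ q₂ p₁ p₂ : ℝ → ℝ} {t : ℝ} (b : ℝ) (hsep : q₁ t < q₂ t)
    (hq₁ : HasDerivAt q₁ (p₁ t + p₂ t * exp (-(q₂ t - q₁ t))) t)
    (hq₂ : HasDerivAt q₂ (p₂ t + p₁ t * exp (-(q₂ t - q₁ t))) t)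
    (hp₁ : HasDerivAt p₁ (-(b - 1) * (p₁ t * p₂ t * exp (-(q₂ t - q₁ t)))) t)
    (hp₂ : HasDerivAt p₂ ((b - 1) * (p₁ t * p₂ t * exp (-(q₂ t - q₁ t)))) t) :
    HasDerivAt (fun τ => p₁ τ * p₂ τ * (1 - exp (-(q₂ τ - q₁ τ))) ^ (b - 1)) 0 t := by
  set E := exp (-(q₂ t - q₁ t))
  have hgap : HasDerivAt (fun τ => 1 - exp (-(q₂ τ - q₁ τ))) (E * (p₂ t - p₁ t) * (1 - E)) t :=
    ((hq₂.fun_sub hq₁).fun_neg.exp.const_sub 1).congr_deriv (by ring)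
  have hne : 1 - E ≠ 0 := (sub_pos.2 (exp_lt_one_iff.2 (by linarith))).ne'
  exact ((hp₁.fun_mul hp₂).fun_mul (hgap.rpow_const_of_eq_mul hne (b - 1))).congr_deriv (by ring)

/-- The two-peakon system of the b-family conserves `H = p₁ + p₂` and
`W = p₁p₂(1 - e^{-(q₂-q₁)})^{b-1}`. -/
theorem two_peakon_first_integrals (b : ℝ)
    (H : ℝ → ℝ → ℝ → ℝ → ℝ)
    (hH : ∀ Q₁ Q₂ P₁ P₂ : ℝ, H Q₁ Q₂ P₁ P₂ =
      (1 / 2) * (P₁ ^ 2 + P₂ ^ 2 + 2 * P₁ * P₂ * Real.exp (-(Q₂ - Q₁))))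
    (q₁ q₂ p₁ p₂ : ℝ → ℝ)
    (hq₁ : Differentiable ℝ q₁) (hq₂ : Differentiable ℝ q₂)
    (hp₁ : Differentiable ℝ p₁) (hp₂ : Differentiable ℝ p₂)
    (horder : ∀ t : ℝ, q₁ t < q₂ t)
    (heq1 : ∀ t : ℝ, deriv q₁ t = deriv (fun x => H (q₁ t) (q₂ t) x (p₂ t)) (p₁ t))
    (heq2 : ∀ t : ℝ, deriv q₂ t = deriv (fun x => H (q₁ t) (q₂ t) (p₁ t) x) (p₂ t))
    (heq3 : ∀ t : ℝ, deriv p₁ t =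
      -(b - 1) * deriv (fun x => H x (q₂ t) (p₁ t) (p₂ t)) (q₁ t))
    (heq4 : ∀ t : ℝ, deriv p₂ t =
      -(b - 1) * deriv (fun x => H (q₁ t) x (p₁ t) (p₂ t)) (q₂ t)) :
    ∀ t : ℝ,
      deriv (fun τ => p₁ τ + p₂ τ) t = 0
      ∧ deriv (fun τ => p₁ τ * p₂ τ
          * (1 - Real.exp (-(q₂ τ - q₁ τ))) ^ (b - 1)) t = 0 := by
  obtain rfl : H = twoPeakonHamiltonian := by
    funext Q₁ Q₂ P₁ P₂
    exact hH Q₁ Q₂ P₁ P₂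
  intro t
  have vq₁ := (hq₁ t).hasDerivAt
  have vq₂ := (hq₂ t).hasDerivAt
  have vp₁ := (hp₁ t).hasDerivAt
  have vp₂ := (hp₂ t).hasDerivAt
  rw [heq1, (hasDerivAt_twoPeakonHamiltonian_p₁ ..).deriv] at vq₁
  rw [heq2, (hasDerivAt_twoPeakonHamiltonian_p₂ ..).deriv] at vq₂
  rw [heq3, (hasDerivAt_twoPeakonHamiltonian_q₁ ..).deriv] at vp₁
  rw [heq4, (hasDerivAt_twoPeakonHamiltonian_q₂ ..).deriv, neg_mul_neg] at vp₂
  exact ⟨((vp₁.add vp₂).congr_deriv (by ring)).deriv,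
    (hasDerivAt_twoPeakon_W_eq_zero b (horder t) vq₁ vq₂ vp₁ vp₂).deriv⟩
end
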